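/- arXiv:1505.06155 — 2 statements merged into one kernel-verified Lean document; each statement's English description precedes it below -/
import Mathlib

section
/- Let G and H be connected simple graphs of order n₁ ≥ 2 and n₂ ≥ 2 respectively. Then 3 ≤ dim_l(G ⊠ H) ≤ n₁·dim_l(H) + n₂·dim_l(G) − dim_l(G)·dim_l(H). -/
open SimpleGraph

/-- The strong product of two simple graphs. -/
def strongProd {α β : Type*} (G : SimpleGraph α) (H : SimpleGraph β) :
    SimpleGraph (α × β) where
  Adj x y := (x.1 = y.1 ∧ H.Adj x.2 y.2) ∨ (x.2 = y.2 ∧ G.Adj x.1 y.1) ∨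
      (G.Adj x.1 y.1 ∧ H.Adj x.2 y.2)
  symm := by
    constructor
    rintro x y (⟨h1, h2⟩ | ⟨h1, h2⟩ | ⟨h1, h2⟩)
    · exact Or.inl ⟨h1.symm, h2.symm⟩
    · exact Or.inr (Or.inl ⟨h1.symm, h2.symm⟩)
    · exact Or.inr (Or.inr ⟨h1.symm, h2.symm⟩)
  loopless := by
    constructor
    rintro x (⟨_, h⟩ | ⟨_, h⟩ | ⟨h, _⟩)
    · exact H.irrefl h
    · exact G.irrefl h
    · exact G.irrefl h

/-- A set `S` is a local metric generator for `G` if every pair of adjacent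
vertices is distinguished by some element of `S`. -/
def IsLocalMetricGenerator {α : Type*} (G : SimpleGraph α) (S : Set α) : Prop :=
  ∀ u v : α, G.Adj u v → ∃ s ∈ S, G.dist u s ≠ G.dist v s

/-- The local metric dimension of a graph. -/
noncomputable def localMetricDim {α : Type*} [Fintype α] (G : SimpleGraph α) : ℕ :=
  sInf {n | ∃ S : Finset α, S.card = n ∧ IsLocalMetricGenerator G ↑S}

/-- A set `S` is a metric generator for `G` if every pair of distinct
vertices is distinguished by some element of `S`. -/
def IsMetricGenerator {α : Type*} (G : SimpleGraph α) (S : Set α) : Prop :=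
  ∀ u v : α, u ≠ v → ∃ s ∈ S, G.dist u s ≠ G.dist v s

/-- The metric dimension of a graph. -/
noncomputable def metricDim {α : Type*} [Fintype α] (G : SimpleGraph α) : ℕ :=
  sInf {n | ∃ S : Finset α, S.card = n ∧ IsMetricGenerator G ↑S}

/-- The eccentricity of a vertex: the maximum distance to another vertex. -/
noncomputable def eccentricity {α : Type*} (G : SimpleGraph α) (v : α) : ℕ :=
  sSup {d | ∃ u, G.dist v u = d}

/-- The diameter of a graph: maximum eccentricity. -/
noncomputable def graphDiam {α : Type*} (G : SimpleGraph α) : ℕ :=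
  sSup {d | ∃ v, eccentricity G v = d}

/-- The radius of a graph: minimum eccentricity. -/
noncomputable def graphRadius {α : Type*} (G : SimpleGraph α) : ℕ :=
  sInf {d | ∃ v, eccentricity G v = d}

/-- The interval `I[x,y]`: vertices lying on some shortest `x`–`y` path. -/
def interval {α : Type*} (G : SimpleGraph α) (x y : α) : Set α :=
  {w | G.dist x w + G.dist w y = G.dist x y}

/-- A graph is adjacency `k`-resolved if for every pair of adjacent vertices
`x, y` there is a vertex `w` with `d(y,w) ≥ k` and `x ∈ I[y,w]`, or
`d(x,w) ≥ k` and `y ∈ I[x,w]`. -/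
def AdjKResolved {α : Type*} (G : SimpleGraph α) (k : ℕ) : Prop :=
  ∀ x y : α, G.Adj x y →
    ∃ w : α, (k ≤ G.dist y w ∧ x ∈ interval G y w) ∨
      (k ≤ G.dist x w ∧ y ∈ interval G x w)

/-- The true twin equivalence relation: `u ≈ v` iff `N[u] = N[v]`. -/
def trueTwinSetoid {α : Type*} (G : SimpleGraph α) : Setoid α where
  r u v := insert u (G.neighborSet u) = insert v (G.neighborSet v)
  iseqv := ⟨fun _ => rfl, Eq.symm, Eq.trans⟩

/-!
Distances in `G ⊠ H` are maxima of the coordinate distances. So if `A` and `B` are local metric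
generators of `G` and `H`, then `A × V(H) ∪ V(G) × B` is one of `G ⊠ H`: an edge moving in `G` is
resolved by a resolver `a ∈ A` of its projection, placed in the `H`-coordinate of whichever
endpoint is closer to `a`. Counting this set by inclusion–exclusion gives the upper bound.

For the lower bound, every vertex `w` of `G ⊠ H` lies in a `K₄`. If `w` is in a local metric
generator, it resolves none of the edges of the opposite triangle, and no single vertex resolves
all three edges of a triangle (its distances to the corners take at most two consecutive values),
so the generator contains two more vertices.
-/

namespace SimpleGraph

variable {α β γ δ : Type*} {G : SimpleGraph α} {H : SimpleGraph β}

lemma Walk.exists_walk_length_le_of_map {K : SimpleGraph γ} {L : SimpleGraph δ} (f : γ → δ)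
    (hf : ∀ ⦃u v⦄, K.Adj u v → f u = f v ∨ L.Adj (f u) (f v)) {u v : γ} :
    ∀ p : K.Walk u v, ∃ q : L.Walk (f u) (f v), q.length ≤ p.length
  | .nil => ⟨.nil, le_rfl⟩
  | .cons h p => by
    obtain ⟨q, hq⟩ := exists_walk_length_le_of_map f hf p
    rcases hf h with heq | hadj
    · exact ⟨q.copy heq.symm rfl, by rw [Walk.length_copy, Walk.length_cons]; omega⟩
    · exact ⟨.cons hadj q, by simpa using hq⟩

lemma Walk.dist_le_length_of_map {K : SimpleGraph γ} {L : SimpleGraph δ} (f : γ → δ)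
    (hf : ∀ ⦃u v⦄, K.Adj u v → f u = f v ∨ L.Adj (f u) (f v)) {u v : γ} (p : K.Walk u v) :
    L.dist (f u) (f v) ≤ p.length :=
  let ⟨q, hq⟩ := p.exists_walk_length_le_of_map f hf
  (dist_le q).trans hq

lemma strongProd_adj_fst {x y : α × β} (h : (strongProd G H).Adj x y) :
    x.1 = y.1 ∨ G.Adj x.1 y.1 := by
  rcases h with ⟨h, _⟩ | ⟨_, h⟩ | ⟨h, _⟩ <;> tauto

lemma strongProd_adj_snd {x y : α × β} (h : (strongProd G H).Adj x y) :
    x.2 = y.2 ∨ H.Adj x.2 y.2 := by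
  rcases h with ⟨_, h⟩ | ⟨h, _⟩ | ⟨_, h⟩ <;> tauto

lemma exists_walk_strongProd_length_eq_max {a c : α} {b d : β} :
    ∀ (p : G.Walk a c) (q : H.Walk b d),
      ∃ r : (strongProd G H).Walk (a, b) (c, d), r.length = max p.length q.length
  | .nil, q => ⟨q.map ⟨(a, ·), fun h => Or.inl ⟨rfl, h⟩⟩, by simp⟩
  | .cons h p, .nil =>
    ⟨(Walk.cons h p).map ⟨(·, b), fun h => Or.inr (Or.inl ⟨rfl, h⟩)⟩, by simp⟩
  | .cons h p, .cons h' q =>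
    let ⟨r, hr⟩ := exists_walk_strongProd_length_eq_max p q
    ⟨.cons (Or.inr (Or.inr ⟨h, h'⟩)) r, (Walk.length_cons _ _).trans (by simp [hr])⟩

theorem Preconnected.strongProd (hG : G.Preconnected) (hH : H.Preconnected) :
    (strongProd G H).Preconnected := fun x y =>
  let ⟨p⟩ := hG x.1 y.1
  let ⟨q⟩ := hH x.2 y.2
  let ⟨r, _⟩ := exists_walk_strongProd_length_eq_max p q
  ⟨r⟩

theorem dist_strongProd (hG : G.Preconnected) (hH : H.Preconnected) (x y : α × β) :
    (strongProd G H).dist x y = max (G.dist x.1 y.1) (H.dist x.2 y.2) := by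
  obtain ⟨p, hp⟩ := (hG x.1 y.1).exists_walk_length_eq_dist
  obtain ⟨q, hq⟩ := (hH x.2 y.2).exists_walk_length_eq_dist
  obtain ⟨r, hr⟩ := exists_walk_strongProd_length_eq_max p q
  obtain ⟨s, hs⟩ := (hG.strongProd hH x y).exists_walk_length_eq_dist
  refine le_antisymm ?_ (max_le ?_ ?_)
  · exact (dist_le r).trans_eq (by rw [hr, hp, hq])
  · exact hs ▸ s.dist_le_length_of_map Prod.fst fun _ _ => strongProd_adj_fst
  · exact hs ▸ s.dist_le_length_of_map Prod.snd fun _ _ => strongProd_adj_snd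

lemma dist_eq_or_eq_or_eq_of_adj_of_adj_of_adj {x y z : α} (hxy : G.Adj x y) (hxz : G.Adj x z)
    (hyz : G.Adj y z) (s : α) :
    G.dist x s = G.dist y s ∨ G.dist x s = G.dist z s ∨ G.dist y s = G.dist z s := by
  have := hxy.diff_dist_adj (u := s)
  have := hxz.diff_dist_adj (u := s)
  have := hyz.diff_dist_adj (u := s)
  simp only [dist_comm (u := s)] at *
  omega

end SimpleGraph

section LocalMetricGenerator

variable {α β : Type*} {G : SimpleGraph α} {H : SimpleGraph β}

lemma isLocalMetricGenerator_univ (G : SimpleGraph α) : IsLocalMetricGenerator G Set.univ :=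
  fun u v huv => ⟨u, trivial, by
    rw [dist_self, dist_comm, dist_eq_one_iff_adj.2 huv]
    exact zero_ne_one⟩

lemma localMetricDim_le_card [Fintype α] {S : Finset α} (hS : IsLocalMetricGenerator G S) :
    localMetricDim G ≤ S.card :=
  Nat.sInf_le ⟨S, rfl, hS⟩

lemma exists_isLocalMetricGenerator_card_eq [Fintype α] (G : SimpleGraph α) :
    ∃ S : Finset α, S.card = localMetricDim G ∧ IsLocalMetricGenerator G S :=
  Nat.sInf_mem (s := {n | ∃ S : Finset α, S.card = n ∧ IsLocalMetricGenerator G S})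
    ⟨_, Finset.univ, rfl, by simpa using isLocalMetricGenerator_univ G⟩

lemma IsLocalMetricGenerator.three_le_card {S : Finset α} (hS : IsLocalMetricGenerator G S)
    {w x y z : α} (hw : w ∈ S) (hwx : G.Adj w x) (hwy : G.Adj w y) (hwz : G.Adj w z)
    (hxy : G.Adj x y) (hxz : G.Adj x z) (hyz : G.Adj y z) : 3 ≤ S.card := by
  classical
  have resolver_mem_erase {u v : α} (hwu : G.Adj w u) (hwv : G.Adj w v) (huv : G.Adj u v) :
      ∃ s ∈ S.erase w, G.dist u s ≠ G.dist v s := by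
    obtain ⟨s, hs, hne⟩ := hS u v huv
    refine ⟨s, Finset.mem_erase.2 ⟨?_, hs⟩, hne⟩
    rintro rfl
    rw [dist_comm, dist_eq_one_iff_adj.2 hwu, dist_comm, dist_eq_one_iff_adj.2 hwv] at hne
    exact hne rfl
  obtain ⟨sxy, hsxy, hxy'⟩ := resolver_mem_erase hwx hwy hxy
  obtain ⟨sxz, hsxz, hxz'⟩ := resolver_mem_erase hwx hwz hxz
  obtain ⟨syz, hsyz, hyz'⟩ := resolver_mem_erase hwy hwz hyz
  have two_le : 2 ≤ (S.erase w).card := by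
    by_contra! h
    have hle := Finset.card_le_one.1 (Nat.le_of_lt_succ h)
    rw [hle sxz hsxz sxy hsxy] at hxz'
    rw [hle syz hsyz sxy hsxy] at hyz'
    have := dist_eq_or_eq_or_eq_of_adj_of_adj_of_adj hxy hxz hyz sxy
    tauto
  rw [Finset.card_erase_of_mem hw] at two_le
  omega

lemma three_le_localMetricDim_strongProd [Fintype α] [Fintype β] [Nontrivial α] [Nontrivial β]
    (hG : G.Preconnected) (hH : H.Preconnected) : 3 ≤ localMetricDim (strongProd G H) := by
  obtain ⟨S, hcard, hS⟩ := exists_isLocalMetricGenerator_card_eq (strongProd G H)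
  obtain ⟨a, b⟩ : α × β := Classical.arbitrary _
  obtain ⟨a', ha⟩ := hG.exists_adj_of_nontrivial a
  obtain ⟨⟨c, d⟩, hcd, -⟩ := hS (a, b) (a', b)
    (Or.inr (Or.inl ⟨rfl, ha⟩))
  obtain ⟨c', hc⟩ := hG.exists_adj_of_nontrivial c
  obtain ⟨d', hd⟩ := hH.exists_adj_of_nontrivial d
  rw [← hcard]
  exact hS.three_le_card (x := (c', d)) (y := (c, d')) (z := (c', d')) hcd
    (Or.inr (Or.inl ⟨rfl, hc⟩)) (Or.inl ⟨rfl, hd⟩) (Or.inr (Or.inr ⟨hc, hd⟩))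
    (Or.inr (Or.inr ⟨hc.symm, hd⟩)) (Or.inl ⟨rfl, hd⟩) (Or.inr (Or.inl ⟨rfl, hc⟩))

lemma IsLocalMetricGenerator.strongProd (hG : G.Preconnected) (hH : H.Preconnected) {A : Set α}
    {B : Set β} (hA : IsLocalMetricGenerator G A) (hB : IsLocalMetricGenerator H B) :
    IsLocalMetricGenerator (strongProd G H) (A ×ˢ Set.univ ∪ Set.univ ×ˢ B) := by
  rintro ⟨u₁, u₂⟩ ⟨v₁, v₂⟩ (⟨rfl, h₂⟩ | ⟨rfl, h₁⟩ | ⟨h₁, h₂⟩)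
  · obtain ⟨b, hb, hne⟩ := hB u₂ v₂ h₂
    exact ⟨(u₁, b), Or.inr ⟨trivial, hb⟩, by simpa [dist_strongProd hG hH] using hne⟩
  · obtain ⟨a, ha, hne⟩ := hA u₁ v₁ h₁
    exact ⟨(a, u₂), Or.inl ⟨ha, trivial⟩, by simpa [dist_strongProd hG hH] using hne⟩
  · obtain ⟨a, ha, hne⟩ := hA u₁ v₁ h₁
    rcases hne.lt_or_gt with hlt | hlt
    · refine ⟨(a, u₂), Or.inl ⟨ha, trivial⟩, ?_⟩
      simp only [dist_strongProd hG hH, dist_self, dist_eq_one_iff_adj.2 h₂.symm]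
      omega
    · refine ⟨(a, v₂), Or.inl ⟨ha, trivial⟩, ?_⟩
      simp only [dist_strongProd hG hH, dist_self, dist_eq_one_iff_adj.2 h₂]
      omega

lemma Finset.card_product_univ_union_univ_product [Fintype α] [Fintype β] [DecidableEq α]
    [DecidableEq β] (A : Finset α) (B : Finset β) :
    (A ×ˢ Finset.univ ∪ Finset.univ ×ˢ B).card =
      Fintype.card α * B.card + Fintype.card β * A.card - A.card * B.card := by
  have := Finset.card_union_add_card_inter (A ×ˢ (Finset.univ : Finset β))
    ((Finset.univ : Finset α) ×ˢ B)
  rw [Finset.product_inter_product, Finset.inter_univ, Finset.univ_inter] at this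
  rw [Finset.card_product, Finset.card_product, Finset.card_product, Finset.card_univ,
    Finset.card_univ] at this
  rw [mul_comm (Fintype.card β)]
  omega

end LocalMetricGenerator

/-- general bounds on the local metric dimension of a strong product. -/
theorem stmt0 {α β : Type*} [Fintype α] [Fintype β]
    (G : SimpleGraph α) (H : SimpleGraph β) (hG : G.Connected) (hH : H.Connected)
    (hn1 : 2 ≤ Fintype.card α) (hn2 : 2 ≤ Fintype.card β) :
    3 ≤ localMetricDim (strongProd G H) ∧
      localMetricDim (strongProd G H) ≤
        Fintype.card α * localMetricDim H + Fintype.card β * localMetricDim G -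
          localMetricDim G * localMetricDim H := by
  classical
  have : Nontrivial α := Fintype.one_lt_card_iff_nontrivial.1 hn1
  have : Nontrivial β := Fintype.one_lt_card_iff_nontrivial.1 hn2
  refine ⟨three_le_localMetricDim_strongProd hG.preconnected hH.preconnected, ?_⟩
  obtain ⟨A, hA, hAgen⟩ := exists_isLocalMetricGenerator_card_eq G
  obtain ⟨B, hB, hBgen⟩ := exists_isLocalMetricGenerator_card_eq H
  have hgen := hAgen.strongProd hG.preconnected hH.preconnected hBgen
  rw [← Finset.coe_univ, ← Finset.coe_univ, ← Finset.coe_product, ← Finset.coe_product,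
    ← Finset.coe_union] at hgen
  rw [← hA, ← hB, ← Finset.card_product_univ_union_univ_product]
  exact localMetricDim_le_card hgen
end

section
/- Let H be a connected graph of order n' ≥ 2 having t true twin equivalence classes, and let n ≥ 2 be an integer. Then dim_l(K_n ⊠ H) = nn' − t, where K_n is the complete graph on n vertices. In particular, if H has no pair of distinct true twin vertices, then dim_l(K_n ⊠ H) = n'(n − 1). -/
open SimpleGraph

/-!
In `K_n ⊠ H` the closed neighbourhood of `(i, b)` is `Fin n × N_H[b]`, so for `n ≥ 2` every
vertex has a true twin and the twin classes are those of `H`. In any graph two distinct true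
twins are adjacent and are distinguished only by themselves, so a local metric generator misses
at most one vertex of each twin class. Conversely, when every class has at least two vertices,
deleting one representative per class leaves a generator: adjacent twins are separated by the
one that remains, and adjacent non-twins `u, v` by a vertex of `N[u] △ N[v]`, a set that is a
union of twin classes and hence meets the generator.
-/

section TrueTwins

variable {α : Type*} {G : SimpleGraph α} {u v w s : α}

lemma mem_insert_neighborSet_comm :
    w ∈ insert u (G.neighborSet u) ↔ u ∈ insert w (G.neighborSet w) := by
  simp only [Set.mem_insert_iff, mem_neighborSet, eq_comm, G.adj_comm]

lemma adj_of_trueTwin (h : trueTwinSetoid G u v) (huv : u ≠ v) : G.Adj u v := by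
  have hv : v ∈ insert u (G.neighborSet u) := h ▸ Set.mem_insert v _
  exact hv.resolve_left huv.symm

lemma reachable_of_trueTwin (h : trueTwinSetoid G u v) : G.Reachable u v := by
  by_cases huv : u = v
  · exact huv ▸ Reachable.refl u
  · exact (adj_of_trueTwin h huv).reachable

lemma dist_le_of_trueTwin (h : trueTwinSetoid G u v) (hsu : s ≠ u) (hsv : s ≠ v) :
    G.dist u s ≤ G.dist v s := by
  by_cases hvs : G.Reachable v s
  · obtain ⟨p, hp⟩ := hvs.exists_walk_length_eq_dist
    cases p with
    | nil => exact absurd rfl hsv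
    | @cons _ x _ hvx q =>
      have hx : x ∈ insert u (G.neighborSet u) := h ▸ Set.mem_insert_of_mem _ hvx
      rw [Walk.length_cons] at hp
      rcases hx with rfl | hux
      · have := dist_le q
        omega
      · have := dist_le (Walk.cons (show G.Adj u x from hux) q)
        rw [Walk.length_cons] at this
        omega
  · have hus : ¬ G.Reachable u s := fun hus => hvs ((reachable_of_trueTwin h).symm.trans hus)
    rw [dist_eq_zero_of_not_reachable hus]
    exact Nat.zero_le _

lemma dist_eq_of_trueTwin (h : trueTwinSetoid G u v) (hsu : s ≠ u) (hsv : s ≠ v) :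
    G.dist u s = G.dist v s :=
  (dist_le_of_trueTwin h hsu hsv).antisymm (dist_le_of_trueTwin (Setoid.symm' _ h) hsv hsu)

lemma dist_self_ne_of_adj (huv : G.Adj u v) : G.dist u u ≠ G.dist v u := by
  rw [dist_self, dist_eq_one_iff_adj.mpr huv.symm]
  exact zero_ne_one

lemma dist_ne_of_adj_of_mem_of_not_mem (huv : G.Adj u v) (hwu : w ∈ insert u (G.neighborSet u))
    (hwv : w ∉ insert v (G.neighborSet v)) : G.dist u w ≠ G.dist v w := by
  have hw : G.Adj u w := hwu.resolve_left fun h => hwv (h ▸ Set.mem_insert_of_mem _ huv.symm)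
  rw [dist_eq_one_iff_adj.mpr hw]
  exact fun h => hwv (Set.mem_insert_of_mem _ (dist_eq_one_iff_adj.mp h.symm))

end TrueTwins

section LocalMetricDim

variable {α : Type*} [Fintype α] {G : SimpleGraph α}

lemma card_sub_card_trueTwin_le {S : Finset α} (hS : IsLocalMetricGenerator G S) :
    Fintype.card α - Nat.card (Quotient (trueTwinSetoid G)) ≤ S.card := by
  classical
  have hinj : Set.InjOn (Quotient.mk (trueTwinSetoid G)) ↑Sᶜ := by
    intro u hu v hv huv
    by_contra hne
    have htwin : trueTwinSetoid G u v := Quotient.exact huv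
    obtain ⟨s, hs, hd⟩ := hS u v (adj_of_trueTwin htwin hne)
    exact hd (dist_eq_of_trueTwin htwin (ne_of_mem_of_not_mem hs (Finset.mem_compl.mp hu))
      (ne_of_mem_of_not_mem hs (Finset.mem_compl.mp hv)))
  have := Finset.card_le_card_of_injOn _ (fun _ _ => Finset.mem_univ _) hinj
  rw [Finset.card_compl, Finset.card_univ] at this
  rw [Nat.card_eq_fintype_card]
  omega

noncomputable def trueTwinTransversal (G : SimpleGraph α) : Finset α := by
  classical
  exact Finset.univ.image (Quotient.out : Quotient (trueTwinSetoid G) → α)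

lemma card_trueTwinTransversal :
    (trueTwinTransversal G).card = Nat.card (Quotient (trueTwinSetoid G)) := by
  classical
  rw [trueTwinTransversal, Finset.card_image_of_injective _ Quotient.out_injective,
    Finset.card_univ, Nat.card_eq_fintype_card]

lemma eq_of_trueTwin_of_mem_trueTwinTransversal {u v : α} (h : trueTwinSetoid G u v)
    (hu : u ∈ trueTwinTransversal G) (hv : v ∈ trueTwinTransversal G) : u = v := by
  classical
  simp only [trueTwinTransversal, Finset.mem_image, Finset.mem_univ, true_and] at hu hv
  obtain ⟨p, rfl⟩ := hu
  obtain ⟨q, rfl⟩ := hv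
  rw [← Quotient.out_eq p, ← Quotient.out_eq q, Quotient.sound h]

lemma exists_trueTwin_notMem_trueTwinTransversal
    (hG : ∀ u : α, ∃ v ≠ u, trueTwinSetoid G u v) (u : α) :
    ∃ v ∉ trueTwinTransversal G, trueTwinSetoid G u v := by
  by_cases hu : u ∈ trueTwinTransversal G
  · obtain ⟨v, hvu, huv⟩ := hG u
    exact ⟨v, fun hv => hvu (eq_of_trueTwin_of_mem_trueTwinTransversal huv hu hv).symm, huv⟩
  · exact ⟨u, hu, Setoid.refl' _ u⟩

lemma isLocalMetricGenerator_compl_trueTwinTransversal [DecidableEq α]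
    (hG : ∀ u : α, ∃ v ≠ u, trueTwinSetoid G u v) :
    IsLocalMetricGenerator G ↑(trueTwinTransversal G)ᶜ := by
  intro u v huv
  by_cases htwin : trueTwinSetoid G u v
  · by_cases hu : u ∈ trueTwinTransversal G
    · have hv : v ∉ trueTwinTransversal G := fun hv =>
        G.ne_of_adj huv (eq_of_trueTwin_of_mem_trueTwinTransversal htwin hu hv)
      exact ⟨v, by simpa using hv, fun h => dist_self_ne_of_adj huv.symm h.symm⟩
    · exact ⟨u, by simpa using hu, dist_self_ne_of_adj huv⟩
  · obtain ⟨w, hw⟩ :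
        ∃ w, ¬ (w ∈ insert u (G.neighborSet u) ↔ w ∈ insert v (G.neighborSet v)) :=
      not_forall.mp fun h => htwin (Set.ext h)
    obtain ⟨w', hw', hww'⟩ := exists_trueTwin_notMem_trueTwinTransversal hG w
    have hmem : ∀ x, w ∈ insert x (G.neighborSet x) ↔ w' ∈ insert x (G.neighborSet x) := by
      intro x
      rw [mem_insert_neighborSet_comm, hww', ← mem_insert_neighborSet_comm]
    rw [hmem, hmem] at hw
    refine ⟨w', by simpa using hw', ?_⟩
    by_cases hwu : w' ∈ insert u (G.neighborSet u)
    · exact dist_ne_of_adj_of_mem_of_not_mem huv hwu (fun hwv => hw (iff_of_true hwu hwv))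
    · have hwv : w' ∈ insert v (G.neighborSet v) := by
        by_contra hwv
        exact hw (iff_of_false hwu hwv)
      exact fun h => dist_ne_of_adj_of_mem_of_not_mem huv.symm hwv hwu h.symm

theorem localMetricDim_eq_card_sub_card_trueTwin
    (hG : ∀ u : α, ∃ v ≠ u, trueTwinSetoid G u v) :
    localMetricDim G = Fintype.card α - Nat.card (Quotient (trueTwinSetoid G)) := by
  classical
  refine le_antisymm (Nat.sInf_le ⟨_, ?_, isLocalMetricGenerator_compl_trueTwinTransversal hG⟩)
    (le_csInf ⟨_, _, rfl, isLocalMetricGenerator_compl_trueTwinTransversal hG⟩ ?_)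
  · rw [Finset.card_compl, card_trueTwinTransversal]
  · rintro m ⟨S, rfl, hS⟩
    exact card_sub_card_trueTwin_le hS

end LocalMetricDim

section StrongProdTop

variable {ι β : Type*} {H : SimpleGraph β}

lemma strongProd_top_adj {x y : ι × β} :
    (strongProd (⊤ : SimpleGraph ι) H).Adj x y ↔
      x ≠ y ∧ (x.2 = y.2 ∨ H.Adj x.2 y.2) := by
  obtain ⟨i, b⟩ := x
  obtain ⟨j, c⟩ := y
  simp only [strongProd, top_adj, ne_eq, Prod.mk.injEq]
  have := H.ne_of_adj (a := b) (b := c)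
  tauto

lemma insert_neighborSet_strongProd_top (x : ι × β) :
    insert x ((strongProd (⊤ : SimpleGraph ι) H).neighborSet x) =
      Prod.snd ⁻¹' insert x.2 (H.neighborSet x.2) := by
  ext y
  simp only [Set.mem_insert_iff, mem_neighborSet, strongProd_top_adj, Set.mem_preimage]
  grind

lemma trueTwinSetoid_strongProd_top [Nonempty ι] :
    trueTwinSetoid (strongProd (⊤ : SimpleGraph ι) H) = (trueTwinSetoid H).comap Prod.snd := by
  ext x y
  change insert x _ = insert y _ ↔ insert x.2 _ = insert y.2 _
  rw [insert_neighborSet_strongProd_top, insert_neighborSet_strongProd_top]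
  exact (Set.preimage_injective.mpr Prod.snd_surjective).eq_iff

lemma card_quotient_trueTwinSetoid_strongProd_top [Nonempty ι] :
    Nat.card (Quotient (trueTwinSetoid (strongProd (⊤ : SimpleGraph ι) H))) =
      Nat.card (Quotient (trueTwinSetoid H)) := by
  rw [trueTwinSetoid_strongProd_top, Nat.card_congr (Setoid.comapQuotientEquiv _ _),
    Set.range_eq_univ.mpr (Quotient.mk''_surjective.comp Prod.snd_surjective), Nat.card_univ]

lemma exists_trueTwin_strongProd_top [Nontrivial ι] (x : ι × β) :
    ∃ y ≠ x, trueTwinSetoid (strongProd (⊤ : SimpleGraph ι) H) x y := by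
  obtain ⟨j, hj⟩ := exists_ne x.1
  refine ⟨(j, x.2), fun h => hj (congrArg Prod.fst h), ?_⟩
  change insert x _ = insert (j, x.2) _
  rw [insert_neighborSet_strongProd_top, insert_neighborSet_strongProd_top]

theorem localMetricDim_strongProd_top [Fintype ι] [Nontrivial ι] [Fintype β] :
    localMetricDim (strongProd (⊤ : SimpleGraph ι) H) =
      Fintype.card ι * Fintype.card β - Nat.card (Quotient (trueTwinSetoid H)) := by
  rw [localMetricDim_eq_card_sub_card_trueTwin exists_trueTwin_strongProd_top,
    card_quotient_trueTwinSetoid_strongProd_top, Fintype.card_prod]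

end StrongProdTop

theorem stmt8_general {β : Type*} [Fintype β] (H : SimpleGraph β)
    (t : ℕ) (ht : Nat.card (Quotient (trueTwinSetoid H)) = t)
    (n : ℕ) (hn : 2 ≤ n) :
    localMetricDim (strongProd (⊤ : SimpleGraph (Fin n)) H) =
        n * Fintype.card β - t ∧
      ((∀ u v : β,
          insert u (H.neighborSet u) = insert v (H.neighborSet v) → u = v) →
        localMetricDim (strongProd (⊤ : SimpleGraph (Fin n)) H) =
          Fintype.card β * (n - 1)) := by
  have : Nontrivial (Fin n) := Fin.nontrivial_iff_two_le.mpr hn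
  have hdim : localMetricDim (strongProd (⊤ : SimpleGraph (Fin n)) H) =
      n * Fintype.card β - t := by
    rw [localMetricDim_strongProd_top, Fintype.card_fin, ht]
  refine ⟨hdim, fun hnoTwins => ?_⟩
  have hmk : Function.Bijective (Quotient.mk (trueTwinSetoid H)) :=
    ⟨fun u v h => hnoTwins u v (Quotient.exact h : trueTwinSetoid H u v),
      Quotient.mk_surjective⟩
  have ht_card : t = Fintype.card β := by
    rw [← ht, ← Nat.card_eq_fintype_card, Nat.card_congr (Equiv.ofBijective _ hmk)]
  rw [hdim, ht_card, Nat.mul_sub_one, mul_comm]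

/-- `dim_l(K_n ⊠ H) = nn' − t`; in particular, if `H` has no pair of
distinct true twin vertices, then `dim_l(K_n ⊠ H) = n'(n − 1)`. -/
theorem stmt8 {β : Type*} [Fintype β] (H : SimpleGraph β) (hH : H.Connected)
    (hn' : 2 ≤ Fintype.card β)
    (t : ℕ) (ht : Nat.card (Quotient (trueTwinSetoid H)) = t)
    (n : ℕ) (hn : 2 ≤ n) :
    localMetricDim (strongProd (⊤ : SimpleGraph (Fin n)) H) =
        n * Fintype.card β - t ∧
      ((∀ u v : β,
          insert u (H.neighborSet u) = insert v (H.neighborSet v) → u = v) →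
        localMetricDim (strongProd (⊤ : SimpleGraph (Fin n)) H) =
          Fintype.card β * (n - 1)) :=
  stmt8_general H t ht n hn
end
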